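/- arXiv:2304.08097 — 2 statements merged into one kernel-verified Lean document; each statement's English description precedes it below -/
import Mathlib

section
/- Fix real numbers p₁, p₂, β and γ with |γ| < 1, and let ω = √(1−γ²). Define the 2×2 matrix R = ½(p₁² + p₂² + β²)·I + iβ(e₃₁^γ p₁ − e₂₃^γ p₂), where e₃₁^γ = i σ₂^γ and e₂₃^γ = i σ₁^γ with σ₁^γ = ω⁻¹·!![−iγ, 1; 1, iγ] and σ₂^γ = !![0, −i; i, 0]. Then the eigenvalues of R are ½(p₁²+p₂²+β²) ± β√(p₁²+p₂²), which are real. -/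
open Matrix Complex

noncomputable def omegaR (γ : ℝ) : ℝ := Real.sqrt (1 - γ^2)

noncomputable def sigma1γ (γ : ℝ) : Matrix (Fin 2) (Fin 2) ℂ :=
  ((omegaR γ : ℂ)⁻¹) • !![-I * γ, 1; 1, I * γ]

noncomputable def sigma2γ : Matrix (Fin 2) (Fin 2) ℂ := !![0, -I; I, 0]

/-- finite part of the non-Hermitian Rashba Hamiltonian -/
noncomputable def Rashba (γ p₁ p₂ β : ℝ) : Matrix (Fin 2) (Fin 2) ℂ :=
  (((p₁^2 + p₂^2 + β^2) / 2 : ℝ) : ℂ) • (1 : Matrix (Fin 2) (Fin 2) ℂ)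
    + (I * β) • ((p₁ : ℂ) • (I • sigma2γ) - (p₂ : ℂ) • (I • sigma1γ γ))

/-!
`R` is `c · 1` plus a traceless matrix, with `c = (p₁² + p₂² + β²)/2`, so its characteristic
polynomial is `(X - c)² - (c² - det R)`. A direct computation gives
`c² - det R = β² (p₁² + p₂²)`: the `γ`-dependence of `σ₁^γ` cancels against its normalisation
`ω⁻¹` precisely because `ω² = 1 - γ²`. Hence the eigenvalues are `c ± β √(p₁² + p₂²)`.
-/

theorem Matrix.spectrum_fin_two_eq_of_trace_of_det {K : Type*} [Field K]
    (A : Matrix (Fin 2) (Fin 2) K) (c r : K) (htr : A.trace = 2 * c)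
    (hdet : A.det = c ^ 2 - r ^ 2) :
    spectrum K A = {c + r, c - r} := by
  ext x
  have hchar : A.charpoly.eval x = (x - (c + r)) * (x - (c - r)) := by
    rw [charpoly_fin_two, htr, hdet]
    simp only [Polynomial.eval_add, Polynomial.eval_sub, Polynomial.eval_mul, Polynomial.eval_pow,
      Polynomial.eval_X, Polynomial.eval_C]
    ring
  rw [mem_spectrum_iff_isRoot_charpoly, Polynomial.IsRoot.def, hchar, mul_eq_zero, sub_eq_zero,
    sub_eq_zero, Set.mem_insert_iff, Set.mem_singleton_iff]

theorem omegaR_sq {γ : ℝ} (hγ : γ ^ 2 ≤ 1) : omegaR γ ^ 2 = 1 - γ ^ 2 :=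
  Real.sq_sqrt (sub_nonneg.mpr hγ)

theorem omegaR_pos {γ : ℝ} (hγ : γ ^ 2 < 1) : 0 < omegaR γ :=
  Real.sqrt_pos.mpr (sub_pos.mpr hγ)

theorem Rashba_trace (γ p₁ p₂ β : ℝ) :
    (Rashba γ p₁ p₂ β).trace = 2 * (((p₁ ^ 2 + p₂ ^ 2 + β ^ 2) / 2 : ℝ) : ℂ) := by
  simp [Rashba, trace_fin_two, sigma1γ, sigma2γ]
  ring

theorem Rashba_det {γ : ℝ} (hγ : |γ| < 1) (p₁ p₂ β : ℝ) :
    (Rashba γ p₁ p₂ β).det = (((p₁ ^ 2 + p₂ ^ 2 + β ^ 2) / 2 : ℝ) : ℂ) ^ 2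
      - ((β * Real.sqrt (p₁ ^ 2 + p₂ ^ 2) : ℝ) : ℂ) ^ 2 := by
  have hγ' : γ ^ 2 < 1 := (sq_lt_one_iff_abs_lt_one γ).mpr hγ
  have hω : (omegaR γ : ℂ) ≠ 0 := ofReal_ne_zero.mpr (omegaR_pos hγ').ne'
  have hω2 : (omegaR γ : ℂ) ^ 2 = 1 - (γ : ℂ) ^ 2 := by exact_mod_cast omegaR_sq hγ'.le
  have hsqrt : (Real.sqrt (p₁ ^ 2 + p₂ ^ 2) : ℂ) ^ 2 = (p₁ : ℂ) ^ 2 + (p₂ : ℂ) ^ 2 := by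
    exact_mod_cast Real.sq_sqrt (by positivity : 0 ≤ p₁ ^ 2 + p₂ ^ 2)
  simp [Rashba, det_fin_two, sigma1γ, sigma2γ]
  field_simp
  rw [I_pow_three]
  linear_combination
    (4 * β ^ 2 * (p₁ ^ 2 * omegaR γ ^ 2 - p₂ ^ 2 * γ ^ 2 - p₂ ^ 2 * (I ^ 2 - 1)) : ℂ) * I_sq
      + (4 * β ^ 2 * p₂ ^ 2 : ℂ) * hω2 + (4 * β ^ 2 * omegaR γ ^ 2 : ℂ) * hsqrt

theorem stmt9 (γ p₁ p₂ β : ℝ) (hγ : |γ| < 1) :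
    spectrum ℂ (Rashba γ p₁ p₂ β) =
      {(((p₁^2 + p₂^2 + β^2) / 2 + β * Real.sqrt (p₁^2 + p₂^2) : ℝ) : ℂ),
       (((p₁^2 + p₂^2 + β^2) / 2 - β * Real.sqrt (p₁^2 + p₂^2) : ℝ) : ℂ)} := by
  rw [ofReal_add, ofReal_sub]
  exact (Rashba γ p₁ p₂ β).spectrum_fin_two_eq_of_trace_of_det _ _ (Rashba_trace γ p₁ p₂ β)
    (Rashba_det hγ p₁ p₂ β)
end

section
/- Let 𝒯 = e₁₃ ∘ K where e₁₃ = σ₁σ₃ (a 2×2 matrix) and K is componentwise complex conjugation on ℂ². Let R_γ be the matrix ½(p₁² + p₂² + β²)·I + iβ(iσ₂^γ p₁ − iσ₁^γ p₂) (with p₁, p₂, β, γ real, |γ|<1, and the γ-deformed Pauli matrices as defined). Then 𝒯⁻¹ ∘ (v ↦ R_γ · v, with p replaced by −p) ∘ 𝒯 = (R_γ)† as linear maps, i.e., R_γ is 𝒯-pseudo-Hermitian: conjugating R_γ(p₁,p₂) by 𝒯 and reversing momentum yields R_γ(p₁,p₂)† = R_{−γ}(p₁,p₂). -/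
open Matrix Complex

/-- e₁₃ = σ₁σ₃ -/
noncomputable def e13 : Matrix (Fin 2) (Fin 2) ℂ := !![0, -1; 1, 0]

/-!
`R_γ` is a real combination of `1`, `σ₂` and `σ₁^γ`. Complex conjugation fixes `1`, negates `σ₂`
and turns `σ₁^γ` into `σ₁^{-γ}`; conjugation by `e₁₃ = iσ₂` then fixes `σ₂` and negates
`σ₁^{-γ}`. After the momentum reversal this is exactly `R_{-γ}`, which is also `R_γ†` because
`σ₂` is Hermitian and `(σ₁^γ)† = σ₁^{-γ}`.
-/

lemma omegaR_neg (γ : ℝ) : omegaR (-γ) = omegaR γ := by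
  simp [omegaR]

lemma sigma2γ_conjTranspose : sigma2γᴴ = sigma2γ := by
  ext i j; fin_cases i <;> fin_cases j <;> simp [sigma2γ]

lemma sigma1γ_conjTranspose (γ : ℝ) : (sigma1γ γ)ᴴ = sigma1γ (-γ) := by
  ext i j; fin_cases i <;> fin_cases j <;> simp [sigma1γ, omegaR_neg]

lemma sigma2γ_map_conj : sigma2γ.map (starRingEnd ℂ) = -sigma2γ := by
  ext i j; fin_cases i <;> fin_cases j <;> simp [sigma2γ]

lemma sigma1γ_map_conj (γ : ℝ) : (sigma1γ γ).map (starRingEnd ℂ) = sigma1γ (-γ) := by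
  ext i j; fin_cases i <;> fin_cases j <;> simp [sigma1γ, omegaR_neg]

lemma Rashba_eq_real_combination (γ p₁ p₂ β : ℝ) :
    Rashba γ p₁ p₂ β = ((p₁ ^ 2 + p₂ ^ 2 + β ^ 2) / 2) • (1 : Matrix (Fin 2) (Fin 2) ℂ)
      - (β * p₁) • sigma2γ + (β * p₂) • sigma1γ γ := by
  ext i j; fin_cases i <;> fin_cases j <;> simp [Rashba, sigma1γ, sigma2γ] <;> ring_nf <;> simp

lemma e13_mul_inv : e13 * e13⁻¹ = 1 :=
  mul_nonsing_inv _ (by simp [e13, det_fin_two])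

lemma e13_mul_sigma2γ : e13 * sigma2γ = sigma2γ * e13 := by
  ext i j; fin_cases i <;> fin_cases j <;> simp [e13, sigma2γ]

lemma e13_mul_sigma1γ (γ : ℝ) : e13 * sigma1γ γ = -(sigma1γ γ * e13) := by
  ext i j; fin_cases i <;> fin_cases j <;> simp [e13, sigma1γ]

lemma e13_conj_sigma2γ : e13 * sigma2γ * e13⁻¹ = sigma2γ := by
  rw [e13_mul_sigma2γ, mul_assoc, e13_mul_inv, mul_one]

lemma e13_conj_sigma1γ (γ : ℝ) : e13 * sigma1γ γ * e13⁻¹ = -sigma1γ γ := by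
  rw [e13_mul_sigma1γ, neg_mul, mul_assoc, e13_mul_inv, mul_one]

lemma map_conj_real_smul (r : ℝ) (M : Matrix (Fin 2) (Fin 2) ℂ) :
    (r • M).map (starRingEnd ℂ) = r • M.map (starRingEnd ℂ) :=
  Matrix.map_smul _ r (fun z => by simp [Complex.real_smul]) M

/-- `M ↦ 𝒯 M 𝒯⁻¹` for the antiunitary `𝒯 = e₁₃ ∘ K`. -/
noncomputable def timeReversalConj (M : Matrix (Fin 2) (Fin 2) ℂ) : Matrix (Fin 2) (Fin 2) ℂ :=
  e13 * M.map (starRingEnd ℂ) * e13⁻¹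

lemma timeReversalConj_real_combination (γ a b c : ℝ) :
    timeReversalConj (a • (1 : Matrix (Fin 2) (Fin 2) ℂ) - b • sigma2γ + c • sigma1γ γ)
      = a • 1 + b • sigma2γ - c • sigma1γ (-γ) := by
  have hmap :
      (a • (1 : Matrix (Fin 2) (Fin 2) ℂ) - b • sigma2γ + c • sigma1γ γ).map (starRingEnd ℂ)
        = a • 1 + b • sigma2γ + c • sigma1γ (-γ) := by
    rw [Matrix.map_add _ (map_add _), Matrix.map_sub _ (map_sub _), map_conj_real_smul,
      map_conj_real_smul, map_conj_real_smul, Matrix.map_one _ (map_zero _) (map_one _),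
      sigma2γ_map_conj, sigma1γ_map_conj, smul_neg, sub_neg_eq_add]
  rw [timeReversalConj, hmap, mul_add, mul_add, add_mul, add_mul, Matrix.mul_smul,
    Matrix.mul_smul, Matrix.mul_smul, Matrix.smul_mul, Matrix.smul_mul, Matrix.smul_mul, mul_one,
    e13_mul_inv, e13_conj_sigma2γ, e13_conj_sigma1γ, smul_neg, sub_eq_add_neg]

lemma Rashba_conjTranspose (γ p₁ p₂ β : ℝ) :
    (Rashba γ p₁ p₂ β)ᴴ = Rashba (-γ) p₁ p₂ β := by
  rw [Rashba_eq_real_combination, Rashba_eq_real_combination, conjTranspose_add,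
    conjTranspose_sub, conjTranspose_smul, conjTranspose_smul, conjTranspose_smul,
    conjTranspose_one, sigma2γ_conjTranspose, sigma1γ_conjTranspose, star_trivial, star_trivial,
    star_trivial]

lemma timeReversalConj_Rashba_neg (γ p₁ p₂ β : ℝ) :
    timeReversalConj (Rashba γ (-p₁) (-p₂) β) = Rashba (-γ) p₁ p₂ β := by
  rw [Rashba_eq_real_combination, timeReversalConj_real_combination, Rashba_eq_real_combination]
  simp only [neg_sq, mul_neg, neg_smul, sub_neg_eq_add, ← sub_eq_add_neg]

theorem stmt11_general (γ p₁ p₂ β : ℝ) :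
    e13 * ((Rashba γ (-p₁) (-p₂) β).map (starRingEnd ℂ)) * e13⁻¹
      = (Rashba γ p₁ p₂ β)ᴴ ∧
    (Rashba γ p₁ p₂ β)ᴴ = Rashba (-γ) p₁ p₂ β :=
  ⟨(timeReversalConj_Rashba_neg γ p₁ p₂ β).trans (Rashba_conjTranspose γ p₁ p₂ β).symm,
    Rashba_conjTranspose γ p₁ p₂ β⟩

theorem stmt11 (γ p₁ p₂ β : ℝ) (hγ : |γ| < 1) :
    e13 * ((Rashba γ (-p₁) (-p₂) β).map (starRingEnd ℂ)) * e13⁻¹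
      = (Rashba γ p₁ p₂ β)ᴴ ∧
    (Rashba γ p₁ p₂ β)ᴴ = Rashba (-γ) p₁ p₂ β :=
  stmt11_general γ p₁ p₂ β
end
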